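/- arXiv:1607.02466 — 7 statements merged into one kernel-verified Lean document; each statement's English description precedes it below -/
import Mathlib

section
/- The feasible set is nonempty (for example, the assignment d i = h + i, where h is an upper bound of all the values m i, is feasible); moreover, for every feasible assignment d one has ∑ i, a i * m i ≤ e(d), and there exists a feasible assignment d* such that e(d*) ≤ e(d) for every feasible assignment d (i.e., the objective e attains a minimum on the feasible set). -/
/-! Shifting an injection `ι → ℕ` above an upper bound of `m` gives a feasible assignment.
Since the weights are positive, the objective is bounded below by `∑ i, a i * m i` on the feasible
set, and an integer-valued function bounded below on a nonempty set attains its infimum. -/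

open Function Set

theorem exists_injective_int_forall_le {ι : Type*} [Countable ι] {m : ι → ℤ}
    (hm : BddAbove (range m)) : ∃ d : ι → ℤ, Injective d ∧ ∀ i, m i ≤ d i := by
  obtain ⟨h, hh⟩ := hm
  obtain ⟨f, hf⟩ := Countable.exists_injective_nat ι
  refine ⟨fun i => h + f i, fun i j hij => hf (by simpa using hij), fun i => ?_⟩
  have hmi : m i ≤ h := hh (mem_range_self i)
  have hfi : (0 : ℤ) ≤ f i := Int.natCast_nonneg _
  linarith

theorem Finset.sum_mul_le_sum_mul_of_le {ι R : Type*} [Semiring R] [PartialOrder R]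
    [IsOrderedRing R] (s : Finset ι) {a m d : ι → R} (ha : ∀ i, 0 ≤ a i) (hmd : ∀ i, m i ≤ d i) :
    ∑ i ∈ s, a i * m i ≤ ∑ i ∈ s, a i * d i :=
  Finset.sum_le_sum fun i _ => mul_le_mul_of_nonneg_left (hmd i) (ha i)

theorem Int.exists_isMinOn_of_bddBelow {α : Type*} {f : α → ℤ} {s : Set α} (hs : s.Nonempty)
    (hf : BddBelow (f '' s)) : ∃ x ∈ s, IsMinOn f s x := by
  obtain ⟨x, hx, hfx⟩ := Int.csInf_mem (hs.image f) hf
  exact ⟨x, hx, fun y hy => hfx ▸ csInf_le hf (mem_image_of_mem f hy)⟩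

/-- The feasible set (injective assignments respecting lower bounds) is nonempty,
`∑ i, a i * m i` is a lower bound of the objective on it, and the objective
attains a minimum on it. -/
theorem stmt_0 (n : ℕ) (a m : Fin n → ℤ) (ha : ∀ i, 0 < a i) :
    (∃ d : Fin n → ℤ, Function.Injective d ∧ ∀ i, m i ≤ d i) ∧
    (∀ d : Fin n → ℤ, Function.Injective d → (∀ i, m i ≤ d i) →
      ∑ i, a i * m i ≤ ∑ i, a i * d i) ∧
    (∃ dstar : Fin n → ℤ, (Function.Injective dstar ∧ ∀ i, m i ≤ dstar i) ∧
      ∀ d : Fin n → ℤ, Function.Injective d → (∀ i, m i ≤ d i) →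
        ∑ i, a i * dstar i ≤ ∑ i, a i * d i) := by
  set feasible : Set (Fin n → ℤ) := {d | Injective d ∧ ∀ i, m i ≤ d i}
  have hne : feasible.Nonempty := exists_injective_int_forall_le (finite_range m).bddAbove
  have hlb : ∀ d ∈ feasible, ∑ i, a i * m i ≤ ∑ i, a i * d i := fun d hd =>
    Finset.univ.sum_mul_le_sum_mul_of_le (fun i => (ha i).le) hd.2
  obtain ⟨dstar, hdstar, hmin⟩ := Int.exists_isMinOn_of_bddBelow hne
    (f := fun d => ∑ i, a i * d i) ⟨_, forall_mem_image.2 hlb⟩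
  exact ⟨hne, fun d hinj hge => hlb d ⟨hinj, hge⟩, dstar, hdstar,
    fun d hinj hge => hmin ⟨hinj, hge⟩⟩
end

section
/- Exchange property of minimizers: if d* is a minimizer, i and j are distinct indices with a j < a i, and m i ≤ d* j, then d* i < d* j (in a minimizing assignment, among two variables that are both eligible for the smaller of their two values, the variable with the greater coefficient must receive the smaller value). -/
/-! Swapping the values of `i` and `j` keeps the assignment injective, keeps it above the lower
bounds when `m i ≤ d* j` (and `m j ≤ d* j < d* i`), and changes the objective by
`-(a i - a j) * (d* i - d* j)`, which is negative if `a j < a i` and `d* j < d* i`. -/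

open Finset

theorem sum_mul_comp_swap {ι R : Type*} [Fintype ι] [DecidableEq ι] [CommRing R]
    (a d : ι → R) {i j : ι} (hij : i ≠ j) :
    ∑ k, a k * d (Equiv.swap i j k) = ∑ k, a k * d k - (a i - a j) * (d i - d j) := by
  have hdiff : ∑ k, a k * (d (Equiv.swap i j k) - d k) = a i * (d j - d i) + a j * (d i - d j) := by
    rw [Fintype.sum_eq_add i j hij fun k ⟨hki, hkj⟩ => by
      rw [Equiv.swap_apply_of_ne_of_ne hki hkj, sub_self, mul_zero]]
    simp only [Equiv.swap_apply_left, Equiv.swap_apply_right]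
  simp only [mul_sub, sum_sub_distrib] at hdiff
  linear_combination hdiff

theorem le_comp_swap_of_le_of_le {ι : Type*} [DecidableEq ι] {m d : ι → ℤ}
    (hm : ∀ k, m k ≤ d k) {i j : ι} (hi : m i ≤ d j) (hj : m j ≤ d i) (k : ι) :
    m k ≤ d (Equiv.swap i j k) := by
  rcases eq_or_ne k i with rfl | hki
  · simpa using hi
  rcases eq_or_ne k j with rfl | hkj
  · simpa using hj
  simpa [Equiv.swap_apply_of_ne_of_ne hki hkj] using hm k

theorem stmt_1_general (n : ℕ) (a m : Fin n → ℤ)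
    (dstar : Fin n → ℤ)
    (hfeas : Function.Injective dstar ∧ ∀ i, m i ≤ dstar i)
    (hmin : ∀ d : Fin n → ℤ, Function.Injective d → (∀ i, m i ≤ d i) →
      ∑ i, a i * dstar i ≤ ∑ i, a i * d i)
    (i j : Fin n) (hij : i ≠ j) (hcoef : a j < a i) (helig : m i ≤ dstar j) :
    dstar i < dstar j := by
  obtain ⟨hinj, hbound⟩ := hfeas
  by_contra! hle
  have hlt : dstar j < dstar i := hle.lt_of_ne fun h => hij (hinj h).symm
  have hswap := hmin (dstar ∘ Equiv.swap i j) (hinj.comp (Equiv.swap i j).injective)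
    (le_comp_swap_of_le_of_le hbound helig ((hbound j).trans hlt.le))
  rw [Function.comp_def, sum_mul_comp_swap a dstar hij] at hswap
  linarith [mul_pos (sub_pos.2 hcoef) (sub_pos.2 hlt)]

/-- Exchange property of minimizers: if `a j < a i` and `m i ≤ d* j`, then
`d* i < d* j`. -/
theorem stmt_1 (n : ℕ) (a m : Fin n → ℤ) (ha : ∀ i, 0 < a i)
    (dstar : Fin n → ℤ)
    (hfeas : Function.Injective dstar ∧ ∀ i, m i ≤ dstar i)
    (hmin : ∀ d : Fin n → ℤ, Function.Injective d → (∀ i, m i ≤ d i) →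
      ∑ i, a i * dstar i ≤ ∑ i, a i * d i)
    (i j : Fin n) (hij : i ≠ j) (hcoef : a j < a i) (helig : m i ≤ dstar j) :
    dstar i < dstar j :=
  stmt_1_general n a m dstar hfeas hmin i j hij hcoef helig
end

section
/- No-gap property of minimizers: if d* is a minimizer, then for every index i and every integer v with m i ≤ v < d* i there exists an index j with d* j = v (no variable of a minimizing assignment can be lowered to an unused value above its minimum). -/
/-
Lowering a coordinate `d* i` to an unused value `v ≥ m i` keeps the assignment injective and
feasible, and since `a i > 0` it strictly decreases the objective, contradicting minimality.
-/

open Function Finset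

theorem Function.Injective.update_of_notMem_range {ι α : Type*} [DecidableEq ι] {d : ι → α}
    (hd : Injective d) {v : α} (hv : v ∉ Set.range d) (i : ι) : Injective (update d i v) := by
  intro x y hxy
  by_cases hx : x = i <;> by_cases hy : y = i
  · exact hx.trans hy.symm
  · subst hx
    rw [update_self, update_of_ne hy] at hxy
    exact (hv ⟨y, hxy.symm⟩).elim
  · subst hy
    rw [update_self, update_of_ne hx] at hxy
    exact (hv ⟨x, hxy⟩).elim
  · rw [update_of_ne hx, update_of_ne hy] at hxy
    exact hd hxy

theorem sum_mul_update_lt {ι R : Type*} [Fintype ι] [DecidableEq ι] [Semiring R] [PartialOrder R]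
    [IsStrictOrderedRing R] {a d : ι → R} {i : ι} (ha : 0 < a i) {v : R} (hv : v < d i) :
    ∑ j, a j * update d i v j < ∑ j, a j * d j := by
  refine sum_lt_sum (fun j _ => ?_) ⟨i, mem_univ i, ?_⟩
  · rcases eq_or_ne j i with rfl | hj
    · rw [update_self]
      exact mul_le_mul_of_nonneg_left hv.le ha.le
    · rw [update_of_ne hj]
  · rw [update_self]
    exact mul_lt_mul_of_pos_left hv ha

/-- No-gap property of minimizers: every value `v` with `m i ≤ v < d* i` is used
by some variable. -/
theorem stmt_2 (n : ℕ) (a m : Fin n → ℤ) (ha : ∀ i, 0 < a i)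
    (dstar : Fin n → ℤ)
    (hfeas : Function.Injective dstar ∧ ∀ i, m i ≤ dstar i)
    (hmin : ∀ d : Fin n → ℤ, Function.Injective d → (∀ i, m i ≤ d i) →
      ∑ i, a i * dstar i ≤ ∑ i, a i * d i) :
    ∀ i : Fin n, ∀ v : ℤ, m i ≤ v → v < dstar i → ∃ j : Fin n, dstar j = v := by
  intro i v hmv hvlt
  by_contra hunused
  have hfeas' : ∀ j, m j ≤ update dstar i v j := by
    intro j
    rcases eq_or_ne j i with rfl | hj
    · rwa [update_self]
    · rw [update_of_ne hj]
      exact hfeas.2 j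
  have hle := hmin _ (hfeas.1.update_of_notMem_range hunused i) hfeas'
  exact (sum_mul_update_lt (ha i) hvlt).not_ge hle
end

section
/- Soundness of the improved filtering (simple case, Theorem 3.3): let c : ℤ, let μ be the attained minimum of e over feasible assignments, and for each index i let μ_i be the attained minimum of e_i over i-feasible assignments. Then: (i) if c < μ, there is no feasible assignment d with e(d) ≤ c; (ii) for every index i, every feasible assignment d with e(d) ≤ c satisfies a i * d i ≤ c − μ_i, and hence d i ≤ (c − μ_i) / a i, where / denotes integer floor division (Int.fdiv). -/
open Finset

theorem Int.le_fdiv_of_mul_le {a b c : ℤ} (ha : 0 < a) (h : a * b ≤ c) : b ≤ c.fdiv a := by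
  rw [Int.fdiv_eq_ediv_of_nonneg _ ha.le]
  exact Int.le_ediv_of_mul_le ha (by rwa [mul_comm])

theorem le_sub_of_sum_le_of_le_sum_erase {ι α : Type*} [Fintype ι] [DecidableEq ι]
    [AddCommGroup α] [PartialOrder α] [IsOrderedAddMonoid α] (f : ι → α) (i : ι) {c μ : α}
    (hμ : μ ≤ ∑ j ∈ univ.erase i, f j) (hc : ∑ j, f j ≤ c) : f i ≤ c - μ := by
  rw [← add_sum_erase _ _ (mem_univ i)] at hc
  rw [le_sub_iff_add_le]
  exact (add_le_add_right hμ _).trans hc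

theorem stmt_5_general (n : ℕ) (a m : Fin n → ℤ) (ha : ∀ i, 0 < a i) (c : ℤ)
    (μ : ℤ)
    (hμ_lb : ∀ d : Fin n → ℤ, Function.Injective d → (∀ i, m i ≤ d i) →
      μ ≤ ∑ i, a i * d i)
    (μi : Fin n → ℤ)
    (hμi_lb : ∀ i : Fin n, ∀ d' : Fin n → ℤ, Set.InjOn d' {j | j ≠ i} →
      (∀ j, j ≠ i → m j ≤ d' j) → μi i ≤ ∑ j ∈ Finset.univ.erase i, a j * d' j) :
    (c < μ → ¬ ∃ d : Fin n → ℤ, (Function.Injective d ∧ ∀ i, m i ≤ d i) ∧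
      ∑ i, a i * d i ≤ c) ∧
    (∀ i : Fin n, ∀ d : Fin n → ℤ, Function.Injective d → (∀ j, m j ≤ d j) →
      ∑ j, a j * d j ≤ c →
      a i * d i ≤ c - μi i ∧ d i ≤ (c - μi i).fdiv (a i)) := by
  refine ⟨fun hc ⟨d, ⟨hinj, hm⟩, hle⟩ => (hc.trans_le (hμ_lb d hinj hm)).not_ge hle, ?_⟩
  intro i d hinj hm hle
  -- a feasible assignment is in particular i-feasible
  have hfeas_i : μi i ≤ ∑ j ∈ univ.erase i, a j * d j :=
    hμi_lb i d hinj.injOn (fun j _ => hm j)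
  have hbound : a i * d i ≤ c - μi i :=
    le_sub_of_sum_le_of_le_sum_erase (fun j => a j * d j) i hfeas_i hle
  exact ⟨hbound, Int.le_fdiv_of_mul_le (ha i) hbound⟩

/-- Soundness of the improved filtering (simple case, Theorem 3.3). -/
theorem stmt_5 (n : ℕ) (a m : Fin n → ℤ) (ha : ∀ i, 0 < a i) (c : ℤ)
    (μ : ℤ)
    (hμ_lb : ∀ d : Fin n → ℤ, Function.Injective d → (∀ i, m i ≤ d i) →
      μ ≤ ∑ i, a i * d i)
    (hμ_att : ∃ d : Fin n → ℤ, (Function.Injective d ∧ ∀ i, m i ≤ d i) ∧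
      ∑ i, a i * d i = μ)
    (μi : Fin n → ℤ)
    (hμi_lb : ∀ i : Fin n, ∀ d' : Fin n → ℤ, Set.InjOn d' {j | j ≠ i} →
      (∀ j, j ≠ i → m j ≤ d' j) → μi i ≤ ∑ j ∈ Finset.univ.erase i, a j * d' j)
    (hμi_att : ∀ i : Fin n, ∃ d' : Fin n → ℤ, (Set.InjOn d' {j | j ≠ i} ∧
      ∀ j, j ≠ i → m j ≤ d' j) ∧ ∑ j ∈ Finset.univ.erase i, a j * d' j = μi i) :
    (c < μ → ¬ ∃ d : Fin n → ℤ, (Function.Injective d ∧ ∀ i, m i ≤ d i) ∧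
      ∑ i, a i * d i ≤ c) ∧
    (∀ i : Fin n, ∀ d : Fin n → ℤ, Function.Injective d → (∀ j, m j ≤ d j) →
      ∑ j, a j * d j ≤ c →
      a i * d i ≤ c - μi i ∧ d i ≤ (c - μi i).fdiv (a i)) :=
  stmt_5_general n a m ha c μ hμ_lb μi hμi_lb
end

section
/- Correction transfer inequality (toward Theorem 3.2): let i and l be distinct indices, let μ_i be the attained minimum of e_i over i-feasible assignments, and let d' be any l-feasible assignment with m l ≤ d' i. Then the assignment obtained from d' by setting the value at index l to d' i (and leaving all indices other than i and l unchanged) is i-feasible, and consequently μ_i ≤ e_l(d') + (a l − a i) * d' i. -/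
open Finset Function

/-- The paper's `i`-feasibility of `d`. -/
def IsFeasibleOff {ι β : Type*} [LE β] (m : ι → β) (i : ι) (d : ι → β) : Prop :=
  Set.InjOn d {j | j ≠ i} ∧ ∀ j, j ≠ i → m j ≤ d j

theorem Set.InjOn.update_apply_self {ι β : Type*} [DecidableEq ι] {f : ι → β} {i l : ι}
    (hf : Set.InjOn f {j | j ≠ l}) :
    Set.InjOn (update f l (f i)) {j | j ≠ i} := by
  have hmaps : Set.MapsTo (Equiv.swap i l) {j | j ≠ i} {j | j ≠ l} := fun j hj => by
    simpa [Equiv.swap_apply_eq_iff] using hj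
  -- Off `i`, the updated map is `f ∘ swap i l`.
  refine (hf.comp (Equiv.swap i l).injective.injOn hmaps).congr fun j hj => ?_
  rcases eq_or_ne j l with rfl | hjl
  · simp
  · simp [update_of_ne hjl, Equiv.swap_apply_of_ne_of_ne hj hjl]

theorem IsFeasibleOff.update_apply_self {ι β : Type*} [DecidableEq ι] [LE β]
    {m d : ι → β} {i l : ι} (hd : IsFeasibleOff m l d) (hml : m l ≤ d i) :
    IsFeasibleOff m i (update d l (d i)) := by
  refine ⟨hd.1.update_apply_self, fun j _ => ?_⟩
  rcases eq_or_ne j l with rfl | hjl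
  · simpa using hml
  · simpa [update_of_ne hjl] using hd.2 j hjl

theorem Finset.sum_erase_mul_update_apply_self {ι R : Type*} [Fintype ι] [DecidableEq ι]
    [CommRing R] (a d : ι → R) (i l : ι) :
    ∑ j ∈ univ.erase i, a j * update d l (d i) j
      = ∑ j ∈ univ.erase l, a j * d j + (a l - a i) * d i := by
  rcases eq_or_ne i l with rfl | hil
  · simp
  have hl : l ∈ univ.erase i := mem_erase.2 ⟨hil.symm, mem_univ l⟩
  have hi : i ∈ univ.erase l := mem_erase.2 ⟨hil, mem_univ i⟩
  rw [← add_sum_erase _ _ hl, ← add_sum_erase _ _ hi, erase_right_comm,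
    sum_congr rfl fun j hj => by rw [update_of_ne (ne_of_mem_erase (mem_erase.1 hj).2)]]
  simp only [update_self]
  ring

theorem stmt_7_general (n : ℕ) (a m : Fin n → ℤ)
    (i l : Fin n)
    (μi : ℤ)
    (hμi_lb : ∀ d' : Fin n → ℤ, Set.InjOn d' {j | j ≠ i} →
      (∀ j, j ≠ i → m j ≤ d' j) → μi ≤ ∑ j ∈ Finset.univ.erase i, a j * d' j)
    (d' : Fin n → ℤ)
    (hd' : Set.InjOn d' {j | j ≠ l} ∧ ∀ j, j ≠ l → m j ≤ d' j)
    (hml : m l ≤ d' i) :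
    (Set.InjOn (Function.update d' l (d' i)) {j | j ≠ i} ∧
      ∀ j, j ≠ i → m j ≤ Function.update d' l (d' i) j) ∧
    μi ≤ (∑ j ∈ Finset.univ.erase l, a j * d' j) + (a l - a i) * d' i := by
  have hfeas : IsFeasibleOff m i (update d' l (d' i)) :=
    IsFeasibleOff.update_apply_self (m := m) hd' hml
  refine ⟨hfeas, ?_⟩
  rw [← sum_erase_mul_update_apply_self a d' i l]
  exact hμi_lb _ hfeas.1 hfeas.2

/-- Correction transfer inequality (toward Theorem 3.2): moving the value of index
`i` to index `l` in an `l`-feasible assignment yields an `i`-feasible assignment,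
hence `μ_i ≤ e_l(d') + (a l − a i) * d' i`. -/
theorem stmt_7 (n : ℕ) (a m : Fin n → ℤ) (ha : ∀ i, 0 < a i)
    (i l : Fin n) (hil : i ≠ l)
    (μi : ℤ)
    (hμi_lb : ∀ d' : Fin n → ℤ, Set.InjOn d' {j | j ≠ i} →
      (∀ j, j ≠ i → m j ≤ d' j) → μi ≤ ∑ j ∈ Finset.univ.erase i, a j * d' j)
    (hμi_att : ∃ d' : Fin n → ℤ, (Set.InjOn d' {j | j ≠ i} ∧
      ∀ j, j ≠ i → m j ≤ d' j) ∧ ∑ j ∈ Finset.univ.erase i, a j * d' j = μi)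
    (d' : Fin n → ℤ)
    (hd' : Set.InjOn d' {j | j ≠ l} ∧ ∀ j, j ≠ l → m j ≤ d' j)
    (hml : m l ≤ d' i) :
    (Set.InjOn (Function.update d' l (d' i)) {j | j ≠ i} ∧
      ∀ j, j ≠ i → m j ≤ Function.update d' l (d' i) j) ∧
    μi ≤ (∑ j ∈ Finset.univ.erase l, a j * d' j) + (a l - a i) * d' i :=
  stmt_7_general n a m i l μi hμi_lb d' hd' hml
end

section
/- The up-feasible set is nonempty (for example, the assignment d i = h − i, where h is a lower bound of all the values M i, is up-feasible); moreover, for every up-feasible assignment d one has e(d) ≤ ∑ i, a i * M i, and there exists an up-feasible assignment d* such that e(d) ≤ e(d*) for every up-feasible assignment d (i.e., the objective e attains a maximum on the up-feasible set). -/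
/-! Shifting an injective `ι → ℕ` down from a common lower bound of the `M i` gives an
up-feasible assignment. Since every `a i` is positive, `e(d) ≤ ∑ i, a i * M i` on the
up-feasible set, and a nonempty set of integers that is bounded above has a greatest
element. -/

theorem Int.exists_isMaxOn_of_bddAbove {α : Type*} {f : α → ℤ} {s : Set α}
    (hs : s.Nonempty) (hf : BddAbove (f '' s)) : ∃ x ∈ s, IsMaxOn f s x := by
  obtain ⟨x, hx, hfx⟩ := Int.csSup_mem (hs.image f) hf
  exact ⟨x, hx, fun y hy => hfx ▸ le_csSup hf (Set.mem_image_of_mem f hy)⟩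

def upFeasible {ι : Type*} (M : ι → ℤ) : Set (ι → ℤ) :=
  {d | Function.Injective d ∧ ∀ i, d i ≤ M i}

theorem upFeasible_nonempty {ι : Type*} [Finite ι] (M : ι → ℤ) :
    (upFeasible M).Nonempty := by
  obtain ⟨h, hh⟩ := Finite.bddBelow_range M
  obtain ⟨e, he⟩ := exists_injective_nat ι
  refine ⟨fun i => h - e i, fun i j hij => he (by simpa using hij), fun i => ?_⟩
  have : h ≤ M i := hh ⟨i, rfl⟩
  show h - e i ≤ M i
  omega

/-- The up-feasible set is nonempty, `∑ i, a i * M i` is an upper bound of the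
objective on it, and the objective attains a maximum on it. -/
theorem stmt_8 (n : ℕ) (a M : Fin n → ℤ) (ha : ∀ i, 0 < a i) :
    (∃ d : Fin n → ℤ, Function.Injective d ∧ ∀ i, d i ≤ M i) ∧
    (∀ d : Fin n → ℤ, Function.Injective d → (∀ i, d i ≤ M i) →
      ∑ i, a i * d i ≤ ∑ i, a i * M i) ∧
    (∃ dstar : Fin n → ℤ, (Function.Injective dstar ∧ ∀ i, dstar i ≤ M i) ∧
      ∀ d : Fin n → ℤ, Function.Injective d → (∀ i, d i ≤ M i) →
        ∑ i, a i * d i ≤ ∑ i, a i * dstar i) := by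
  have hub : ∀ d ∈ upFeasible M, ∑ i, a i * d i ≤ ∑ i, a i * M i := fun d hd =>
    Finset.sum_le_sum fun i _ => mul_le_mul_of_nonneg_left (hd.2 i) (ha i).le
  obtain ⟨dstar, hdstar, hmax⟩ := Int.exists_isMaxOn_of_bddAbove
    (f := fun d => ∑ i, a i * d i) (upFeasible_nonempty M)
    ⟨_, by rintro _ ⟨d, hd, rfl⟩; exact hub d hd⟩
  exact ⟨upFeasible_nonempty M, fun d hinj hle => hub d ⟨hinj, hle⟩,
    dstar, hdstar, fun d hinj hle => hmax ⟨hinj, hle⟩⟩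
end

section
/- Soundness of the improved filtering for lower-bounded sums (the e ≥ c case): let c : ℤ, let ν be the attained maximum of e over up-feasible assignments, and for each index i let ν_i be the attained maximum of e_i over i-up-feasible assignments. Then: (i) if ν < c, there is no up-feasible assignment d with c ≤ e(d); (ii) for every index i, every up-feasible assignment d with c ≤ e(d) satisfies c − ν_i ≤ a i * d i. -/
open Finset

theorem sub_le_of_le_sum_of_sum_erase_le {ι α : Type*} [Fintype ι] [DecidableEq ι]
    [AddCommGroup α] [PartialOrder α] [IsOrderedAddMonoid α] {f : ι → α} {c b : α} (i : ι)
    (hc : c ≤ ∑ j, f j) (hb : ∑ j ∈ univ.erase i, f j ≤ b) : c - b ≤ f i := by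
  rw [← add_sum_erase _ _ (mem_univ i)] at hc
  rw [sub_le_iff_le_add]
  exact hc.trans (add_le_add_right hb _)

theorem stmt_11_general (n : ℕ) (a M : Fin n → ℤ) (c : ℤ)
    (ν : ℤ)
    (hν_ub : ∀ d : Fin n → ℤ, Function.Injective d → (∀ i, d i ≤ M i) →
      ∑ i, a i * d i ≤ ν)
    (νi : Fin n → ℤ)
    (hνi_ub : ∀ i : Fin n, ∀ d' : Fin n → ℤ, Set.InjOn d' {j | j ≠ i} →
      (∀ j, j ≠ i → d' j ≤ M j) → ∑ j ∈ Finset.univ.erase i, a j * d' j ≤ νi i) :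
    (ν < c → ¬ ∃ d : Fin n → ℤ, (Function.Injective d ∧ ∀ i, d i ≤ M i) ∧
      c ≤ ∑ i, a i * d i) ∧
    (∀ i : Fin n, ∀ d : Fin n → ℤ, Function.Injective d → (∀ j, d j ≤ M j) →
      c ≤ ∑ j, a j * d j → c - νi i ≤ a i * d i) := by
  constructor
  · rintro hνc ⟨d, ⟨hinj, hle⟩, hc⟩
    exact (hc.trans (hν_ub d hinj hle)).not_gt hνc
  · intro i d hinj hle hc
    exact sub_le_of_le_sum_of_sum_erase_le i hc
      (hνi_ub i d hinj.injOn fun j _ => hle j)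

/-- Soundness of the improved filtering for lower-bounded sums (the `e ≥ c` case). -/
theorem stmt_11 (n : ℕ) (a M : Fin n → ℤ) (ha : ∀ i, 0 < a i) (c : ℤ)
    (ν : ℤ)
    (hν_ub : ∀ d : Fin n → ℤ, Function.Injective d → (∀ i, d i ≤ M i) →
      ∑ i, a i * d i ≤ ν)
    (hν_att : ∃ d : Fin n → ℤ, (Function.Injective d ∧ ∀ i, d i ≤ M i) ∧
      ∑ i, a i * d i = ν)
    (νi : Fin n → ℤ)
    (hνi_ub : ∀ i : Fin n, ∀ d' : Fin n → ℤ, Set.InjOn d' {j | j ≠ i} →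
      (∀ j, j ≠ i → d' j ≤ M j) → ∑ j ∈ Finset.univ.erase i, a j * d' j ≤ νi i)
    (hνi_att : ∀ i : Fin n, ∃ d' : Fin n → ℤ, (Set.InjOn d' {j | j ≠ i} ∧
      ∀ j, j ≠ i → d' j ≤ M j) ∧ ∑ j ∈ Finset.univ.erase i, a j * d' j = νi i) :
    (ν < c → ¬ ∃ d : Fin n → ℤ, (Function.Injective d ∧ ∀ i, d i ≤ M i) ∧
      c ≤ ∑ i, a i * d i) ∧
    (∀ i : Fin n, ∀ d : Fin n → ℤ, Function.Injective d → (∀ j, d j ≤ M j) →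
      c ≤ ∑ j, a j * d j → c - νi i ≤ a i * d i) :=
  stmt_11_general n a M c ν hν_ub νi hνi_ub
end
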